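/- arXiv:0806.4812 — 2 statements merged into one kernel-verified Lean document; each statement's English description precedes it below -/
import Mathlib

section
/- For every n ≥ 3, the number of permutations π of {1,…,n} which have exactly one index i with 2 ≤ i ≤ n such that neither π(i)−1 nor π(i)+1 occurs among π(1),…,π(i−1), equals 2^{n−2}·(2^{n−1} − n). -/
open scoped Classical

noncomputable def numKinks {n : ℕ} (π : Equiv.Perm (Fin n)) : ℕ :=
  (Finset.univ.filter (fun i : Fin n =>
    0 < (i : ℕ) ∧ ∀ j : Fin n, (j : ℕ) < (i : ℕ) →
      (π j : ℕ) + 1 ≠ (π i : ℕ) ∧ (π i : ℕ) + 1 ≠ (π j : ℕ))).card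

noncomputable def F (n d : ℕ) : ℕ :=
  (Finset.univ.filter (fun π : Equiv.Perm (Fin n) => numKinks π = d)).card

/-!
Call an entry of a sequence free if neither neighbouring value occurs before it; the kinks
of a permutation are its free entries other than the first. Let `N(S, m)` count the
orderings of a finite set `S ⊆ ℕ` with `m` free entries. The last entry `v` of an ordering
is free exactly when `v ± 1 ∉ S`, which gives a recursion for `N(S, m)` over `v ∈ S`.
Each maximal block of consecutive integers of `S` contains a free entry (its earliest one),
so `N(S, m) = 0` when `S` has more than `m` blocks. This cuts the recursion down to
intervals and pairs of intervals: an interval of length `p + 1` has `2 ^ p` orderings with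
one free entry, two separated intervals of lengths `p + 1`, `q + 1` have
`C(p + q + 2, p + 1) * 2 ^ (p + q)` orderings with two free entries (Pascal's rule), and
summing the latter over the removed interior point of an interval gives the formula.
-/

open Finset

namespace Kink

def IsIsolated (S : Finset ℕ) (v : ℕ) : Prop := ∀ u ∈ S, u + 1 ≠ v ∧ v + 1 ≠ u

/-- Orderings are stored last entry first: this counts the entries of `l` none of whose
neighbours `± 1` occur after them in `l`, i.e. the free entries of the reversed sequence. -/
noncomputable def freeCount : List ℕ → ℕ
  | [] => 0
  | v :: l => freeCount l + if IsIsolated l.toFinset v then 1 else 0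

def orderings (S : Finset ℕ) : Finset (List ℕ) := S.val.lists.toFinset

noncomputable def numOrderings (S : Finset ℕ) (m : ℕ) : ℕ :=
  #{l ∈ orderings S | freeCount l = m}

/-- The orderings of `S` with `m + 1` free entries whose last entry is `v`. -/
noncomputable def numOrderingsEndingAt (S : Finset ℕ) (m v : ℕ) : ℕ :=
  numOrderings (S.erase v) (if IsIsolated S v then m else m + 1)

theorem mem_orderings {S : Finset ℕ} {l : List ℕ} :
    l ∈ orderings S ↔ (l : Multiset ℕ) = S.val := by
  simp [orderings, eq_comm]

theorem toFinset_of_mem_orderings {S : Finset ℕ} {l : List ℕ} (hl : l ∈ orderings S) :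
    l.toFinset = S := by
  rw [← S.val_toFinset, ← mem_orderings.1 hl]
  rfl

theorem nodup_of_mem_orderings {S : Finset ℕ} {l : List ℕ} (hl : l ∈ orderings S) : l.Nodup :=
  Multiset.coe_nodup.1 (mem_orderings.1 hl ▸ S.nodup)

theorem cons_mem_orderings {S : Finset ℕ} {v : ℕ} {l : List ℕ} :
    v :: l ∈ orderings S ↔ v ∈ S ∧ l ∈ orderings (S.erase v) := by
  simp only [mem_orderings, erase_val, ← Multiset.cons_coe]
  refine ⟨fun h => ⟨?_, ?_⟩, fun ⟨hv, hl⟩ => by rw [hl, Multiset.cons_erase hv]⟩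
  · rw [← Finset.mem_val, ← h]
    exact Multiset.mem_cons_self v l
  · rw [← h, Multiset.erase_cons_head]

theorem freeCount_reverse_ofFn {n : ℕ} (f : Fin n → ℕ) :
    freeCount (List.ofFn f).reverse =
      #{i : Fin n | ∀ j : Fin n, (j : ℕ) < i → f j + 1 ≠ f i ∧ f i + 1 ≠ f j} := by
  induction n with
  | zero => simp [freeCount]
  | succ n ih =>
    rw [List.ofFn_succ', List.concat_eq_append, List.reverse_concat', freeCount, ih,
      card_filter, card_filter, Fin.sum_univ_castSucc]
    congr 1
    · refine sum_congr rfl fun i _ => ?_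
      simp [Fin.forall_fin_succ', -not_and]
    · simp [IsIsolated, Fin.forall_fin_succ']

theorem numKinks_add_one {n : ℕ} (hn : 0 < n) (π : Equiv.Perm (Fin n)) :
    numKinks π + 1 = freeCount (List.ofFn fun i => (π i : ℕ)).reverse := by
  obtain ⟨n, rfl⟩ := Nat.exists_eq_add_of_lt hn
  rw [freeCount_reverse_ofFn, numKinks, card_filter, card_filter, Fin.sum_univ_succ,
    Fin.sum_univ_succ]
  simp [add_comm]

theorem F_eq_numOrderings {n : ℕ} (hn : 0 < n) (d : ℕ) :
    F n d = numOrderings (range n) (d + 1) := by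
  refine card_bij (fun π _ => (List.ofFn fun i => (π i : ℕ)).reverse) ?_ ?_ ?_
  · intro π hπ
    simp only [mem_filter, mem_univ, true_and] at hπ
    refine mem_filter.2 ⟨mem_orderings.2 ?_, by rw [← numKinks_add_one hn, hπ]⟩
    rw [Multiset.coe_reverse]
    refine (Multiset.Nodup.ext ?_ (range n).nodup).2 fun x => ?_
    · exact List.nodup_ofFn.2 (Fin.val_injective.comp π.injective)
    · simp only [Multiset.mem_coe, List.mem_ofFn, mem_val, mem_range]
      exact ⟨fun ⟨i, hi⟩ => hi ▸ (π i).isLt,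
        fun hx => ⟨π.symm ⟨x, hx⟩, by simp⟩⟩
  · intro π _ σ _ h
    ext i
    exact congrFun (List.ofFn_injective (List.reverse_injective h)) i
  · intro l hl
    obtain ⟨hl, hd⟩ := mem_filter.1 hl
    have hl' : (l.reverse : Multiset ℕ) = (range n).val := by
      rw [Multiset.coe_reverse]
      exact mem_orderings.1 hl
    have hlen : l.reverse.length = n := by simpa using congrArg Multiset.card hl'
    have hlt (i : Fin n) : l.reverse[i] < n := by
      rw [← mem_range, ← mem_val, ← hl', Multiset.mem_coe]
      exact List.getElem_mem _
    have hinj : Function.Injective fun i : Fin n => (⟨l.reverse[i], hlt i⟩ : Fin n) :=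
      fun i j h => Fin.ext <|
        (List.nodup_reverse.2 (nodup_of_mem_orderings hl)).getElem_inj_iff.1 (congrArg Fin.val h)
    set π := Equiv.ofBijective _ hinj.bijective_of_finite
    have hπ : List.ofFn (fun i => (π i : ℕ)) = l.reverse :=
      List.ext_getElem (by simp [hlen]) (by simp [π])
    refine ⟨π, ?_, by rw [hπ, List.reverse_reverse]⟩
    have := numKinks_add_one hn π
    rw [hπ, List.reverse_reverse, hd] at this
    simpa using this

theorem isIsolated_erase {S : Finset ℕ} {v : ℕ} : IsIsolated (S.erase v) v ↔ IsIsolated S v :=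
  ⟨fun h u hu =>
    (eq_or_ne u v).elim (fun _ => by omega) fun huv => h u (mem_erase.2 ⟨huv, hu⟩),
    fun h u hu => h u (mem_of_mem_erase hu)⟩

theorem numOrderings_empty : numOrderings ∅ 0 = 1 := by
  rw [numOrderings, card_eq_one]
  exact ⟨[], by ext l; simp +contextual [mem_orderings, freeCount]⟩

theorem numOrderings_succ (S : Finset ℕ) (m : ℕ) :
    numOrderings S (m + 1) = ∑ v ∈ S, numOrderingsEndingAt S m v := by
  simp only [numOrderings, numOrderingsEndingAt]
  rw [← card_sigma]
  refine (card_nbij' (fun p => p.1 :: p.2) (fun l => ⟨l.headI, l.tail⟩) ?_ ?_ ?_ ?_).symm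
  · rintro ⟨v, l⟩ h
    simp only [coe_sigma, Set.mem_sigma_iff, mem_coe, mem_filter] at h
    simp only [mem_coe, mem_filter, cons_mem_orderings, freeCount,
      toFinset_of_mem_orderings h.2.1, isIsolated_erase]
    refine ⟨⟨h.1, h.2.1⟩, ?_⟩
    split_ifs at h ⊢ <;> omega
  · rintro (_ | ⟨v, l⟩) h
    · simp [freeCount] at h
    simp only [mem_coe, mem_filter, cons_mem_orderings, freeCount] at h
    simp only [coe_sigma, Set.mem_sigma_iff, mem_coe, mem_filter, List.headI_cons,
      List.tail_cons]
    rw [toFinset_of_mem_orderings h.1.2, isIsolated_erase] at h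
    refine ⟨h.1.1, h.1.2, ?_⟩
    split_ifs at h ⊢ <;> omega
  · rintro ⟨v, l⟩ _
    rfl
  · rintro (_ | ⟨v, l⟩) h
    · simp [freeCount] at h
    · rfl

theorem freeCount_le_length : ∀ l : List ℕ, freeCount l ≤ l.length
  | [] => le_rfl
  | v :: l => by
    rw [freeCount, List.length_cons]
    have := freeCount_le_length l
    split_ifs <;> omega

theorem numOrderings_eq_zero_of_card_lt {S : Finset ℕ} {m : ℕ} (h : #S < m) :
    numOrderings S m = 0 := by
  refine card_eq_zero.2 (filter_eq_empty_iff.2 fun l hl hm => ?_)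
  have := freeCount_le_length l
  rw [← Multiset.coe_card, mem_orderings.1 hl, card_val] at this
  omega

def numBlocks (S : Finset ℕ) : ℕ := #{x ∈ S | x + 1 ∉ S}

theorem numBlocks_insert_le {T : Finset ℕ} {v : ℕ} (hv : v ∉ T) :
    numBlocks (insert v T) ≤ numBlocks T + if IsIsolated T v then 1 else 0 := by
  have hsub : {x ∈ insert v T | x + 1 ∉ insert v T} ⊆ insert v {x ∈ T | x + 1 ∉ T} := by
    intro x
    simp only [mem_filter, mem_insert]
    tauto
  split_ifs with hiso
  · exact (card_le_card hsub).trans (card_insert_le _ _)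
  simp only [IsIsolated, not_forall, not_and_or, not_not] at hiso
  obtain ⟨u, hu, huv | hvu⟩ := hiso
  · -- `u = v - 1` ends a block of `T` but not of `insert v T`
    have hu' : u ∈ {x ∈ T | x + 1 ∉ T} := mem_filter.2 ⟨hu, huv ▸ hv⟩
    have hsub' : {x ∈ insert v T | x + 1 ∉ insert v T} ⊆
        (insert v {x ∈ T | x + 1 ∉ T}).erase u :=
      fun x hx => mem_erase.2 ⟨by rintro rfl; simp [huv] at hx, hsub hx⟩
    calc numBlocks (insert v T)
        ≤ #((insert v {x ∈ T | x + 1 ∉ T}).erase u) := card_le_card hsub'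
      _ = numBlocks T + 0 := by
        rw [card_erase_of_mem (mem_insert_of_mem hu'), card_insert_of_notMem (by simp [hv])]
        rfl
  · refine card_le_card fun x hx => ?_
    simp only [mem_filter, mem_insert] at hx ⊢
    rcases hx with ⟨rfl | hx, hx'⟩ <;> simp_all

theorem numBlocks_le_freeCount :
    ∀ {l : List ℕ}, l.Nodup → numBlocks l.toFinset ≤ freeCount l
  | [], _ => by simp [numBlocks, freeCount]
  | v :: l, hl => by
    rw [List.nodup_cons, ← List.mem_toFinset] at hl
    rw [List.toFinset_cons, freeCount]
    exact (numBlocks_insert_le hl.1).trans (by gcongr; exact numBlocks_le_freeCount hl.2)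

theorem numOrderings_eq_zero_of_lt_numBlocks {S : Finset ℕ} {m : ℕ} (h : m < numBlocks S) :
    numOrderings S m = 0 := by
  refine card_eq_zero.2 (filter_eq_empty_iff.2 fun l hl hm => ?_)
  have := numBlocks_le_freeCount (nodup_of_mem_orderings hl)
  rw [toFinset_of_mem_orderings hl] at this
  omega

def Separated (A B : Finset ℕ) : Prop := ∀ x ∈ A, ∀ y ∈ B, x + 1 < y ∨ y + 1 < x

theorem Separated.symm {A B : Finset ℕ} (h : Separated A B) : Separated B A :=
  fun x hx y hy => (h y hy x hx).symm

theorem Separated.mono {A B A' B' : Finset ℕ} (h : Separated A B) (hA : A' ⊆ A)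
    (hB : B' ⊆ B) :
    Separated A' B' :=
  fun x hx y hy => h x (hA hx) y (hB hy)

theorem Separated.disjoint {A B : Finset ℕ} (h : Separated A B) : Disjoint A B :=
  disjoint_left.2 fun x hA hB => by have := h x hA x hB; omega

theorem Separated.erase_union {A B : Finset ℕ} (h : Separated A B) {v : ℕ} (hv : v ∈ A) :
    (A ∪ B).erase v = A.erase v ∪ B := by
  rw [erase_union_distrib, erase_eq_of_notMem (disjoint_left.1 h.disjoint hv)]

theorem separated_Ico_Ico {a b c d : ℕ} (h : b < c) : Separated (Ico a b) (Ico c d) := by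
  intro x hx y hy
  simp only [mem_Ico] at hx hy
  omega

theorem numBlocks_union {A B : Finset ℕ} (h : Separated A B) :
    numBlocks (A ∪ B) = numBlocks A + numBlocks B := by
  unfold numBlocks
  rw [filter_union, card_union_of_disjoint (disjoint_filter_filter h.disjoint)]
  congr 1 <;> refine congrArg card (filter_congr fun x hx => ?_) <;> simp only [mem_union, not_or]
  · exact and_iff_left_of_imp fun _ hB => by have := h x hx _ hB; omega
  · exact and_iff_right_of_imp fun _ hA => by have := h _ hA x hx; omega

theorem numBlocks_Ico {a b : ℕ} (h : a < b) : numBlocks (Ico a b) = 1 := by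
  rw [numBlocks, card_eq_one]
  exact ⟨b - 1, by ext x; simp only [mem_filter, mem_Ico, mem_singleton]; omega⟩

theorem sum_numOrderingsEndingAt_Ico_one_union {a : ℕ} {B : Finset ℕ}
    (h : Separated (Ico a (a + 1)) B) (m : ℕ) :
    ∑ v ∈ Ico a (a + 1), numOrderingsEndingAt (Ico a (a + 1) ∪ B) m v = numOrderings B m := by
  rw [Nat.Ico_succ_singleton] at h ⊢
  have ha : a ∈ ({a} : Finset ℕ) := mem_singleton_self a
  have hiso : IsIsolated ({a} ∪ B) a := by
    intro u hu
    rcases mem_union.1 hu with hu | hu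
    · rw [mem_singleton.1 hu]; omega
    · have := h a ha u hu; omega
  rw [sum_singleton, numOrderingsEndingAt, if_pos hiso, h.erase_union ha, erase_singleton,
    empty_union]

theorem not_isIsolated_of_mem_Ico {a p v : ℕ} {S : Finset ℕ} (hS : Ico a (a + p + 2) ⊆ S)
    (hv : v ∈ Ico a (a + p + 2)) : ¬ IsIsolated S v := by
  rw [mem_Ico] at hv
  intro h
  rcases lt_or_ge (v + 1) (a + p + 2) with hlt | hge
  · exact (h (v + 1) (hS (mem_Ico.2 ⟨by omega, hlt⟩))).2 rfl
  · exact (h (v - 1) (hS (mem_Ico.2 ⟨by omega, by omega⟩))).1 (by omega)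

theorem sum_numOrderingsEndingAt_Ico_union {a p : ℕ} {B : Finset ℕ}
    (h : Separated (Ico a (a + p + 2)) B) (m : ℕ) :
    ∑ v ∈ Ico a (a + p + 2), numOrderingsEndingAt (Ico a (a + p + 2) ∪ B) m v =
      numOrderings (Ico (a + 1) (a + 1 + p + 1) ∪ B) (m + 1) +
        numOrderings (Ico a (a + p + 1) ∪ B) (m + 1) +
        ∑ i ∈ range p,
          numOrderings (Ico a (a + i + 1) ∪ Ico (a + i + 2) (a + p + 2) ∪ B) (m + 1) := by
  have hend : ∀ v ∈ Ico a (a + p + 2), numOrderingsEndingAt (Ico a (a + p + 2) ∪ B) m v =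
      numOrderings ((Ico a (a + p + 2)).erase v ∪ B) (m + 1) := fun v hv => by
    rw [numOrderingsEndingAt, if_neg (not_isIsolated_of_mem_Ico subset_union_left hv),
      h.erase_union hv]
  rw [sum_congr rfl hend, sum_eq_sum_Ico_succ_bot (by omega),
    show a + p + 2 = a + p + 1 + 1 from rfl, sum_Ico_succ_top (by omega), sum_Ico_eq_sum_range,
    show a + p + 1 - (a + 1) = p by omega, add_comm _ (numOrderings _ _), ← add_assoc]
  refine congrArg₂ (· + ·) (congrArg₂ (· + ·) ?_ ?_) (sum_congr rfl fun i hi => ?_) <;>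
    congr 2 <;> ext x
  · simp only [mem_erase, mem_Ico]; omega
  · simp only [mem_erase, mem_Ico]; omega
  · simp only [mem_range] at hi
    simp only [mem_erase, mem_Ico, mem_union]; omega

theorem sum_numOrderingsEndingAt_Ico_union_of_lt {a p m : ℕ} {B : Finset ℕ}
    (h : Separated (Ico a (a + p + 2)) B) (hm : m < numBlocks B + 1) :
    ∑ v ∈ Ico a (a + p + 2), numOrderingsEndingAt (Ico a (a + p + 2) ∪ B) m v =
      numOrderings (Ico (a + 1) (a + 1 + p + 1) ∪ B) (m + 1) +
        numOrderings (Ico a (a + p + 1) ∪ B) (m + 1) := by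
  rw [sum_numOrderingsEndingAt_Ico_union h, sum_eq_zero, add_zero]
  intro i hi
  rw [mem_range] at hi
  have hsub : Ico a (a + i + 1) ∪ Ico (a + i + 2) (a + p + 2) ⊆ Ico a (a + p + 2) :=
    union_subset (Ico_subset_Ico_right (by omega)) (Ico_subset_Ico_left (by omega))
  apply numOrderings_eq_zero_of_lt_numBlocks
  rw [numBlocks_union (h.mono hsub subset_rfl), numBlocks_union (separated_Ico_Ico (by omega)),
    numBlocks_Ico (by omega), numBlocks_Ico (by omega)]
  omega

theorem numOrderings_Ico_one (a p : ℕ) : numOrderings (Ico a (a + p + 1)) 1 = 2 ^ p := by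
  induction p generalizing a with
  | zero =>
    simpa [numOrderings_succ, numOrderings_empty] using
      sum_numOrderingsEndingAt_Ico_one_union (a := a) (B := ∅) (by simp [Separated]) 0
  | succ p ih =>
    rw [show a + (p + 1) + 1 = a + p + 2 by ring, numOrderings_succ]
    simpa [ih, pow_succ, mul_two] using
      sum_numOrderingsEndingAt_Ico_union_of_lt (a := a) (p := p) (B := ∅) (m := 0)
        (by simp [Separated]) (by simp)

theorem numOrderings_Ico_union_Ico {p q a b : ℕ}
    (h : Separated (Ico a (a + p + 1)) (Ico b (b + q + 1))) :
    numOrderings (Ico a (a + p + 1) ∪ Ico b (b + q + 1)) 2 =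
      (p + q + 2).choose (p + 1) * 2 ^ (p + q) := by
  induction hN : p + q using Nat.strong_induction_on generalizing p q a b with | _ N ih =>
  -- the orderings ending in the first interval; those ending in the second one are symmetric
  have first : ∀ p q a b, p + q = N → Separated (Ico a (a + p + 1)) (Ico b (b + q + 1)) →
      ∑ v ∈ Ico a (a + p + 1),
          numOrderingsEndingAt (Ico a (a + p + 1) ∪ Ico b (b + q + 1)) 1 v =
        (p + q + 1).choose p * 2 ^ (p + q) := by
    rintro (_ | p) q a b hN h
    · simpa [numOrderings_Ico_one] using sum_numOrderingsEndingAt_Ico_one_union h 1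
    · rw [show a + (p + 1) + 1 = a + p + 2 by ring] at h ⊢
      rw [sum_numOrderingsEndingAt_Ico_union_of_lt h (by rw [numBlocks_Ico (by omega)]; omega),
        ih _ (by omega) (h.mono (Ico_subset_Ico (by omega) (by omega)) subset_rfl) rfl,
        ih _ (by omega) (h.mono (Ico_subset_Ico_right (by omega)) subset_rfl) rfl]
      ring_nf
  rw [numOrderings_succ, sum_union h.disjoint, first p q a b hN h, union_comm,
    first q p b a (by omega) h.symm, add_comm q p,
    Nat.choose_symm_of_eq_add (show p + q + 1 = q + (p + 1) by ring), ← add_mul,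
    ← Nat.choose_succ_succ', ← hN]

theorem sum_range_choose_succ (n : ℕ) :
    ∑ i ∈ range (n + 1), (n + 2).choose (i + 1) + 2 = 2 ^ (n + 2) := by
  rw [← Nat.sum_range_choose, sum_range_succ _ (n + 2), sum_range_succ' _ (n + 1),
    Nat.choose_self, Nat.choose_zero_right]

theorem numOrderings_Ico_two (a n : ℕ) :
    numOrderings (Ico a (a + n + 2)) 2 + (n + 2) * 2 ^ n = 2 ^ (2 * n + 1) := by
  induction n generalizing a with
  | zero =>
    have hsplit := sum_numOrderingsEndingAt_Ico_union (a := a) (p := 0) (B := ∅)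
      (by simp [Separated]) 1
    simp only [union_empty, range_zero, sum_empty, add_zero] at hsplit
    rw [numOrderings_succ, hsplit, numOrderings_eq_zero_of_card_lt (by simp),
      numOrderings_eq_zero_of_card_lt (by simp)]
    norm_num
  | succ n ih =>
    have hsplit := sum_numOrderingsEndingAt_Ico_union (a := a) (p := n + 1) (B := ∅)
      (by simp [Separated]) 1
    simp only [union_empty] at hsplit
    have hinterior : ∀ i ∈ range (n + 1),
        numOrderings (Ico a (a + i + 1) ∪ Ico (a + i + 2) (a + (n + 1) + 2)) (1 + 1) =
          (n + 2).choose (i + 1) * 2 ^ n := fun i hi => by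
      have hi : i ≤ n := Nat.lt_succ_iff.1 (mem_range.1 hi)
      rw [show a + (n + 1) + 2 = a + i + 2 + (n - i) + 1 by omega,
        numOrderings_Ico_union_Ico (separated_Ico_Ico (by omega)), show i + (n - i) = n by omega]
    have ih₁ := ih (a + 1)
    have ih₂ := ih a
    rw [show a + 1 + n + 2 = a + 1 + (n + 1) + 1 by ring] at ih₁
    rw [show a + n + 2 = a + (n + 1) + 1 by ring] at ih₂
    rw [numOrderings_succ, hsplit, sum_congr rfl hinterior, ← sum_mul]
    linear_combination ih₁ + ih₂ + 2 ^ n * sum_range_choose_succ n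

end Kink

theorem F_one_kink (n : ℕ) (hn : 3 ≤ n) : F n 1 = 2 ^ (n - 2) * (2 ^ (n - 1) - n) := by
  obtain ⟨k, rfl⟩ : ∃ k, n = k + 2 := ⟨n - 2, by omega⟩
  have h := Kink.numOrderings_Ico_two 0 k
  rw [zero_add, ← Finset.range_eq_Ico] at h
  rw [Kink.F_eq_numOrderings (by omega), Nat.add_sub_cancel, show k + 2 - 1 = k + 1 by omega,
    Nat.mul_sub, ← pow_add, show k + (k + 1) = 2 * k + 1 by ring, mul_comm (2 ^ k), ← h,
    Nat.add_sub_cancel]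
end

section
/- For every n ≥ 5, the number of permutations of {1,…,n} with exactly two kinks equals (1/32)·6^n − (1/16)·4^n·(n−1) + (1/32)·2^n·(2n² − 4n − 1). -/
open scoped Classical

/-!
Write `σ = π⁻¹`. Position `i` is a kink of `π` exactly when the value `π i` is a valley of `σ`
(smaller than its neighbours in one-line notation); position `0` adds the valley at the global
minimum of `σ`. So `F n d` counts permutations with `d + 1` valleys.

Every permutation of `Fin (n + 1)` arises uniquely by inserting a new minimum at some position `p`
into a permutation `σ` of `Fin n`. Valleys are never adjacent, so exactly `2k` positions lie next to
one of the `k` valleys of `σ`; inserting there trades that valley for `p`, while each of the other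
`n + 1 - 2k` positions creates a new valley. Hence the number `Q n k` of permutations with `k`
valleys satisfies `Q (n+1) (k+1) = 2(k+1) Q n (k+1) + (n+1-2k) Q n k`, and the closed forms for
`k = 1, 2, 3` follow by induction on `n`.
-/

open Finset SimpleGraph Equiv

variable {n : ℕ}

def IsValley (σ : Perm (Fin n)) (i : Fin n) : Prop :=
  ∀ j, (pathGraph n).Adj i j → σ i < σ j

noncomputable def valleys (σ : Perm (Fin n)) : Finset (Fin n) :=
  univ.filter (IsValley σ)

@[simp]
lemma mem_valleys {σ : Perm (Fin n)} {i : Fin n} : i ∈ valleys σ ↔ IsValley σ i := by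
  simp [valleys]

lemma IsValley.not_adj {σ : Perm (Fin n)} {i j : Fin n} (hi : IsValley σ i) (hj : IsValley σ j) :
    ¬ (pathGraph n).Adj i j :=
  fun h => (hi j h).asymm (hj i h.symm)

lemma isValley_inv_apply_iff (π : Perm (Fin n)) (i : Fin n) :
    IsValley π⁻¹ (π i) ↔ ∀ j, j < i → ¬ (pathGraph n).Adj (π i) (π j) := by
  refine ⟨fun h j hji hadj => ?_, fun h w hadj => ?_⟩
  · have := h (π j) hadj
    simp only [Perm.coe_inv, symm_apply_apply] at this
    exact this.asymm hji
  · obtain ⟨j, rfl⟩ := π.surjective w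
    have hne : i ≠ j := by rintro rfl; exact hadj.ne rfl
    simpa using lt_of_le_of_ne (not_lt.mp fun hji => h j hji hadj) hne

lemma card_valleys_inv (hn : 0 < n) (π : Perm (Fin n)) :
    #(valleys π⁻¹) = numKinks π + 1 := by
  have hkink : ∀ i, IsValley π⁻¹ (π i) ↔ (i : ℕ) = 0 ∨
      (0 < (i : ℕ) ∧ ∀ j : Fin n, (j : ℕ) < (i : ℕ) →
        (π j : ℕ) + 1 ≠ (π i : ℕ) ∧ (π i : ℕ) + 1 ≠ (π j : ℕ)) := by
    intro i
    rw [isValley_inv_apply_iff]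
    simp only [pathGraph_adj, Fin.lt_def]
    constructor
    · intro h
      rcases Nat.eq_zero_or_pos i with h0 | h0
      · exact Or.inl h0
      · exact Or.inr ⟨h0, fun j hj => by have := h j hj; omega⟩
    · rintro (h0 | ⟨-, h⟩) j hj
      · omega
      · have := h j hj; omega
  rw [numKinks, ← card_insert_of_notMem (a := ⟨0, hn⟩) (by simp)]
  refine (card_bijective π π.bijective fun i => ?_).symm
  simp only [mem_insert, mem_filter, mem_univ, true_and, mem_valleys, hkink, Fin.ext_iff]

lemma one_le_card_valleys (hn : 0 < n) (σ : Perm (Fin n)) : 1 ≤ #(valleys σ) := by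
  have := card_valleys_inv hn σ⁻¹
  rw [inv_inv] at this
  omega

lemma Fin.val_succAbove (p : Fin (n + 1)) (j : Fin n) :
    (p.succAbove j : ℕ) = if (j : ℕ) < p then (j : ℕ) else j + 1 := by
  unfold Fin.succAbove
  split_ifs <;> simp_all [Fin.lt_def]

lemma pathGraph_adj_succAbove_self_iff (p : Fin (n + 1)) (j : Fin n) :
    (pathGraph (n + 1)).Adj p (p.succAbove j) ↔ p = j.castSucc ∨ p = j.succ := by
  simp only [pathGraph_adj, Fin.ext_iff, Fin.val_succAbove, Fin.val_castSucc, Fin.val_succ]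
  split_ifs <;> omega

lemma pathGraph_adj_succAbove_iff {p : Fin (n + 1)} {j : Fin n}
    (hp : ¬ (pathGraph (n + 1)).Adj p (p.succAbove j)) (j' : Fin n) :
    (pathGraph (n + 1)).Adj (p.succAbove j) (p.succAbove j') ↔ (pathGraph n).Adj j j' := by
  simp only [pathGraph_adj, Fin.val_succAbove] at hp ⊢
  split_ifs at hp ⊢ <;> omega

def insertMin (σ : Perm (Fin n)) (p : Fin (n + 1)) : Perm (Fin (n + 1)) :=
  (finSuccEquiv' p).trans ((Equiv.optionCongr σ).trans (finSuccEquiv n).symm)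

@[simp]
lemma insertMin_self (σ : Perm (Fin n)) (p : Fin (n + 1)) : insertMin σ p p = 0 := by
  simp [insertMin]

@[simp]
lemma insertMin_succAbove (σ : Perm (Fin n)) (p : Fin (n + 1)) (i : Fin n) :
    insertMin σ p (p.succAbove i) = (σ i).succ := by
  simp [insertMin]

lemma insertMin_injective :
    Function.Injective fun x : Perm (Fin n) × Fin (n + 1) => insertMin x.1 x.2 := by
  rintro ⟨σ, p⟩ ⟨τ, q⟩ h
  simp only at h
  obtain rfl : p = q := (insertMin τ q).injective (by rw [insertMin_self, ← h, insertMin_self])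
  refine Prod.ext (Equiv.ext fun i => Fin.succ_injective _ ?_) rfl
  rw [← insertMin_succAbove, ← insertMin_succAbove, h]

lemma insertMin_bijective :
    Function.Bijective fun x : Perm (Fin n) × Fin (n + 1) => insertMin x.1 x.2 :=
  (Fintype.bijective_iff_injective_and_card _).mpr
    ⟨insertMin_injective, by simp [Fintype.card_perm, Nat.factorial_succ, mul_comm]⟩

lemma isValley_insertMin_self (σ : Perm (Fin n)) (p : Fin (n + 1)) :
    IsValley (insertMin σ p) p := fun w hw => by
  rw [insertMin_self, Fin.pos_iff_ne_zero, ← insertMin_self σ p,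
    (insertMin σ p).injective.ne_iff]
  exact hw.ne'

lemma isValley_insertMin_succAbove_iff (σ : Perm (Fin n)) (p : Fin (n + 1)) (j : Fin n) :
    IsValley (insertMin σ p) (p.succAbove j) ↔
      IsValley σ j ∧ ¬ (pathGraph (n + 1)).Adj p (p.succAbove j) := by
  constructor
  · intro h
    have hp : ¬ (pathGraph (n + 1)).Adj p (p.succAbove j) := fun hadj => by
      simpa using h p hadj.symm
    refine ⟨fun j' hj' => ?_, hp⟩
    simpa using h _ ((pathGraph_adj_succAbove_iff hp j').mpr hj')
  · rintro ⟨h, hp⟩ w hw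
    have hwp : w ≠ p := by rintro rfl; exact hp hw.symm
    obtain ⟨j', rfl⟩ := Fin.exists_succAbove_eq hwp
    simpa using h j' ((pathGraph_adj_succAbove_iff hp j').mp hw)

lemma valleys_insertMin (σ : Perm (Fin n)) (p : Fin (n + 1)) :
    valleys (insertMin σ p) =
      insert p (((valleys σ).filter fun j => ¬ (pathGraph (n + 1)).Adj p (p.succAbove j)).map
        p.succAboveEmb) := by
  ext v
  simp only [mem_insert, mem_map, mem_filter, mem_valleys, Fin.coe_succAboveEmb]
  rcases eq_or_ne v p with rfl | hv
  · simp [isValley_insertMin_self]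
  · obtain ⟨j, rfl⟩ := Fin.exists_succAbove_eq hv
    simp [isValley_insertMin_succAbove_iff, hv]

noncomputable def valleyNbhd (σ : Perm (Fin n)) : Finset (Fin (n + 1)) :=
  univ.filter fun p => ∃ j ∈ valleys σ, (pathGraph (n + 1)).Adj p (p.succAbove j)

lemma IsValley.eq_of_adj_succAbove {σ : Perm (Fin n)} {p : Fin (n + 1)} {j j' : Fin n}
    (hj : IsValley σ j) (hj' : IsValley σ j') (h : (pathGraph (n + 1)).Adj p (p.succAbove j))
    (h' : (pathGraph (n + 1)).Adj p (p.succAbove j')) : j = j' := by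
  by_contra hne
  apply hj.not_adj hj'
  rw [pathGraph_adj_succAbove_self_iff] at h h'
  simp only [pathGraph_adj, Fin.ext_iff, Fin.val_castSucc, Fin.val_succ] at h h' hne ⊢
  omega

lemma card_valleyNbhd (σ : Perm (Fin n)) : #(valleyNbhd σ) = 2 * #(valleys σ) := by
  have hN : valleyNbhd σ =
      (valleys σ).map Fin.castSuccEmb ∪ (valleys σ).map (Fin.succEmb n) := by
    ext p
    simp [valleyNbhd, pathGraph_adj_succAbove_self_iff, and_or_left, exists_or, eq_comm]
  rw [hN, card_union_of_disjoint, card_map, card_map, two_mul]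
  simp only [Finset.disjoint_left, mem_map, mem_valleys]
  rintro _ ⟨j, hj, rfl⟩ ⟨j', hj', h⟩
  apply hj.not_adj hj'
  simp only [Fin.ext_iff, Fin.coe_castSuccEmb, Fin.coe_succEmb, Fin.val_succ, Fin.val_castSucc] at h
  rw [pathGraph_adj]
  omega

lemma two_mul_card_valleys_le (σ : Perm (Fin n)) : 2 * #(valleys σ) ≤ n + 1 := by
  simpa [card_valleyNbhd] using card_le_univ (valleyNbhd σ)

lemma card_valleys_insertMin (σ : Perm (Fin n)) (p : Fin (n + 1)) :
    #(valleys (insertMin σ p)) =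
      if p ∈ valleyNbhd σ then #(valleys σ) else #(valleys σ) + 1 := by
  have hnear : #((valleys σ).filter fun j => (pathGraph (n + 1)).Adj p (p.succAbove j)) =
      if p ∈ valleyNbhd σ then 1 else 0 := by
    split_ifs with hp
    · simp only [valleyNbhd, mem_filter, mem_univ, true_and] at hp
      obtain ⟨j, hj, hadj⟩ := hp
      rw [card_eq_one]
      refine ⟨j, eq_singleton_iff_unique_mem.mpr
        ⟨mem_filter.mpr ⟨hj, hadj⟩, fun j' hj' => ?_⟩⟩
      rw [mem_filter, mem_valleys] at hj'
      exact (mem_valleys.mp hj).eq_of_adj_succAbove hj'.1 hadj hj'.2 |>.symm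
    · simp only [valleyNbhd, mem_filter, mem_univ, true_and, not_exists, not_and] at hp
      simpa using hp
  have hsplit := card_filter_add_card_filter_not (s := valleys σ)
    fun j => (pathGraph (n + 1)).Adj p (p.succAbove j)
  rw [valleys_insertMin, card_insert_of_notMem (by simp [Fin.succAbove_ne]), card_map]
  split_ifs at hnear ⊢ <;> omega

lemma card_filter_card_valleys_insertMin (σ : Perm (Fin n)) (k : ℕ) :
    #{p | #(valleys (insertMin σ p)) = k + 1} =
      (if #(valleys σ) = k + 1 then 2 * (k + 1) else 0) +
        (if #(valleys σ) = k then n + 1 - 2 * k else 0) := by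
  simp_rw [card_valleys_insertMin]
  by_cases h₁ : #(valleys σ) = k + 1
  · rw [if_pos h₁, if_neg (by omega), ← h₁, ← card_valleyNbhd, add_zero]
    congr 1
    ext p
    by_cases hp : p ∈ valleyNbhd σ <;> simp [hp]
  by_cases h₀ : #(valleys σ) = k
  · rw [if_neg h₁, if_pos h₀, ← h₀, ← card_valleyNbhd, zero_add,
      show n + 1 - #(valleyNbhd σ) = #(valleyNbhd σ)ᶜ by simp [card_compl]]
    congr 1
    ext p
    by_cases hp : p ∈ valleyNbhd σ <;> simp [hp, h₀]
  · rw [if_neg h₁, if_neg h₀, card_eq_zero, filter_eq_empty_iff]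
    intro p _
    split_ifs <;> omega

noncomputable def valleyCount (n k : ℕ) : ℕ :=
  #{σ : Perm (Fin n) | #(valleys σ) = k}

lemma valleyCount_succ_succ (n k : ℕ) :
    valleyCount (n + 1) (k + 1) =
      2 * (k + 1) * valleyCount n (k + 1) + (n + 1 - 2 * k) * valleyCount n k := by
  calc valleyCount (n + 1) (k + 1)
      = #{x : Perm (Fin n) × Fin (n + 1) | #(valleys (insertMin x.1 x.2)) = k + 1} :=
        (card_bijective _ insertMin_bijective (by simp)).symm
    _ = ∑ σ, #{p | #(valleys (insertMin σ p)) = k + 1} := by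
        simp only [card_filter, Fintype.sum_prod_type]
        rfl
    _ = _ := by
        simp only [card_filter_card_valleys_insertMin, sum_add_distrib, ← sum_filter, sum_const,
          smul_eq_mul, valleyCount]
        ring

lemma valleyCount_zero (hn : 0 < n) : valleyCount n 0 = 0 := by
  simpa [valleyCount] using fun σ => Nat.one_le_iff_ne_zero.mp (one_le_card_valleys hn σ)

lemma valleyCount_eq_zero_of_lt {k : ℕ} (h : n + 1 < 2 * k) : valleyCount n k = 0 := by
  simpa [valleyCount] using fun σ (hσ : #(valleys σ) = k) => by
    have := two_mul_card_valleys_le σ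
    omega

lemma valleyCount_one_one : valleyCount 1 1 = 1 := by
  rw [valleyCount, filter_true_of_mem fun σ _ => ?_]
  · rfl
  · have := two_mul_card_valleys_le σ
    have := one_le_card_valleys one_pos σ
    omega

lemma cast_valleyCount_succ_succ (n k : ℕ) :
    (valleyCount (n + 1) (k + 1) : ℚ) =
      2 * (k + 1) * valleyCount n (k + 1) + ((n : ℚ) + 1 - 2 * k) * valleyCount n k := by
  rw [valleyCount_succ_succ]
  rcases le_or_gt (2 * k) (n + 1) with h | h
  · push_cast [Nat.cast_sub h]
    ring
  · simp [valleyCount_eq_zero_of_lt h]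

lemma valleyCount_one (hn : 1 ≤ n) : (valleyCount n 1 : ℚ) = 2 ^ n / 2 := by
  induction n, hn using Nat.le_induction with
  | base => simp [valleyCount_one_one]
  | succ n hn ih =>
    rw [cast_valleyCount_succ_succ, ih, valleyCount_zero hn]
    ring

lemma valleyCount_two (hn : 1 ≤ n) : (valleyCount n 2 : ℚ) = 4 ^ n / 8 - n * 2 ^ n / 4 := by
  induction n, hn using Nat.le_induction with
  | base => norm_num [valleyCount_eq_zero_of_lt]
  | succ n hn ih =>
    rw [cast_valleyCount_succ_succ, ih, valleyCount_one hn]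
    push_cast
    ring

lemma valleyCount_three (hn : 1 ≤ n) :
    (valleyCount n 3 : ℚ) =
      6 ^ n / 32 - (n - 1) * 4 ^ n / 16 + (2 * n ^ 2 - 4 * n - 1) * 2 ^ n / 32 := by
  induction n, hn using Nat.le_induction with
  | base => norm_num [valleyCount_eq_zero_of_lt]
  | succ n hn ih =>
    rw [cast_valleyCount_succ_succ, ih, valleyCount_two hn]
    push_cast
    ring

lemma F_eq_valleyCount (hn : 0 < n) (d : ℕ) : F n d = valleyCount n (d + 1) :=
  card_bijective _ inv_involutive.bijective (by simp [card_valleys_inv hn])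

theorem F_two_kinks (n : ℕ) (hn : 5 ≤ n) :
    (F n 2 : ℚ) = (1 / 32) * 6 ^ n - (1 / 16) * 4 ^ n * ((n : ℚ) - 1)
      + (1 / 32) * 2 ^ n * (2 * (n : ℚ) ^ 2 - 4 * (n : ℚ) - 1) := by
  rw [F_eq_valleyCount (by omega), valleyCount_three (by omega)]
  ring
end
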